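/- arXiv:2408.01027 — 3 statements merged into one kernel-verified Lean document; each statement's English description precedes it below -/
import Mathlib

section
/- The RandChore mechanism is group-strategyproof in expectation: there do not exist a set S ⊆ N of agents with true valuations v_S and a reported profile (v̂_S, v̂_{-S}) such that for every i ∈ S, agent i's expected true utility under RandChore(v̂_S, v̂_{-S}) is at least his expected true utility under RandChore(v_S, v̂_{-S}), with strict inequality for at least one i ∈ S. -/
open Finset

attribute [local instance] Classical.propDecidable

noncomputable section

/-- The bundle of agent `i` under deterministic allocation `A`. -/
def bundle {m n : ℕ} (A : Fin m → Fin n) (i : Fin n) : Finset (Fin m) :=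
  Finset.univ.filter fun j => A j = i

/-- Additive value of a bundle. -/
def sval {m : ℕ} (f : Fin m → ℝ) (S : Finset (Fin m)) : ℝ := ∑ j ∈ S, f j

/-- The set `Q` of (indices of) items on which some agent reports value zero. -/
def chQ {n m : ℕ} (r : Fin n → Fin m → ℝ) : Finset (Fin m) :=
  Finset.univ.filter fun q => ∃ i, r i q = 0

/-- The set of agents reporting value zero on item `q`. -/
def chZ {n m : ℕ} (r : Fin n → Fin m → ℝ) (q : Fin m) : Finset (Fin n) :=
  Finset.univ.filter fun i => r i q = 0

/-- The position of item `q ∈ Q̄` in the list of the items of `Q̄` sorted in nonincreasing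
order of inherent value `w`, ties broken by smallest index. -/
def chRank {n m : ℕ} (w : Fin m → ℝ) (r : Fin n → Fin m → ℝ) (q : Fin m) : ℕ :=
  (((chQ r)ᶜ).filter fun q' => w q' > w q ∨ (w q' = w q ∧ q' < q)).card

/-- The probability that mechanism `RandChore`, on reported profile `r` (inherent values `w`),
outputs the deterministic allocation `A`: each item of `Q` goes independently and uniformly to
an agent reporting zero on it, and the items of `Q̄` are allocated round-robin (in nonincreasing
inherent value, ties by index) according to a uniformly random permutation of the agents. -/
def randChoreProb {n m : ℕ} (hn : 0 < n) (w : Fin m → ℝ) (r : Fin n → Fin m → ℝ)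
    (A : Fin m → Fin n) : ℝ :=
  ((∑ σ : Equiv.Perm (Fin n),
      if ∀ q ∈ (chQ r)ᶜ, A q = σ ⟨chRank w r q % n, Nat.mod_lt _ hn⟩ then (1 : ℝ) else 0)
    / (Fintype.card (Equiv.Perm (Fin n)) : ℝ))
  * ∏ q ∈ chQ r, (if r (A q) q = 0 then (1 : ℝ) / ((chZ r q).card : ℝ) else 0)

/-- The expected utility, under `RandChore` on reported profile `r`, of agent `i` whose true
additive valuation is `vi`. -/
def randChoreExp {n m : ℕ} (hn : 0 < n) (w : Fin m → ℝ) (r : Fin n → Fin m → ℝ)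
    (vi : Fin m → ℝ) (i : Fin n) : ℝ :=
  ∑ A : Fin m → Fin n, randChoreProb hn w r A * sval vi (bundle A i)

/-!
The expected utility of an agent is linear in the marginal probabilities with which the items
reach him, and these marginals forget the random permutation: an item of `Q` reaches each
zero-reporter with probability `1 / |Z|`, an item of `Q̄` each agent with probability `1 / n`.
So the coalition's total expected utility can be compared item by item. If truthful reporting
puts `q` in `Q`, every member who dislikes `q` says so and never receives it, so the coalition
cannot lose on `q` by telling the truth. Otherwise every member dislikes `q` and every outsider
reports disliking it; truthfully the coalition bears the share `|S| / n` of `q`, and under a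
misreport either the same share or all of `q`. Hence no misreport raises the coalition's total,
while weak improvement for all members with a strict one for some would.
-/

lemma sum_perm_ite_apply_eq {α : Type*} [Fintype α] [DecidableEq α] (a b : α) :
    (∑ σ : Equiv.Perm α, if σ a = b then (1 : ℝ) else 0)
      = Fintype.card (Equiv.Perm α) / Fintype.card α := by
  set c : α → ℝ := fun b => ∑ σ : Equiv.Perm α, if σ a = b then (1 : ℝ) else 0
  -- `σ ↦ swap b b' * σ` carries the permutations sending `a` to `b` onto those sending it to `b'`.
  have hc : ∀ b', c b' = c b := fun b' => by
    refine (Equiv.sum_comp (Equiv.mulLeft (Equiv.swap b b')) _).symm.trans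
      (Finset.sum_congr rfl fun σ _ => ?_)
    simp only [Equiv.coe_mulLeft, Equiv.Perm.mul_apply, Equiv.swap_apply_eq_iff,
      Equiv.swap_apply_right]
  have htotal : ∑ b', c b' = Fintype.card (Equiv.Perm α) := by
    simp only [c]
    rw [Finset.sum_comm]
    simp
  rw [Finset.sum_congr rfl fun b' _ => hc b', Finset.sum_const, Finset.card_univ,
    nsmul_eq_mul] at htotal
  have hα : (Fintype.card α : ℝ) ≠ 0 := by
    exact_mod_cast (Fintype.card_pos_iff.mpr ⟨a⟩).ne'
  rw [← htotal, mul_div_cancel_left₀ _ hα]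

lemma sum_pi_prod_mul_ite_apply_eq {ι α R : Type*} [Fintype ι] [DecidableEq ι] [Fintype α]
    [DecidableEq α] [CommSemiring R] (f : ι → α → R) (q : ι) (a : α)
    (hf : ∀ j ≠ q, ∑ x, f j x = 1) :
    ∑ A : ι → α, (∏ j, f j (A j)) * (if A q = a then 1 else 0) = f q a := by
  set g : ι → α → R := fun j x => if j = q then (if x = a then f j x else 0) else f j x
  have hg : ∀ A : ι → α, (∏ j, f j (A j)) * (if A q = a then 1 else 0) = ∏ j, g j (A j) := by
    intro A
    rw [← Finset.mul_prod_erase _ _ (Finset.mem_univ q),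
      ← Finset.mul_prod_erase _ _ (Finset.mem_univ q)]
    rw [Finset.prod_congr rfl fun j hj => if_neg (Finset.ne_of_mem_erase hj)]
    simp only [g, if_true]
    split_ifs <;> simp
  rw [Finset.sum_congr rfl fun A _ => hg A, ← Fintype.prod_sum, ← Finset.mul_prod_erase _ _
    (Finset.mem_univ q), Finset.prod_eq_one fun j hj => ?_]
  · simp [g]
  · simp only [g, if_neg (Finset.ne_of_mem_erase hj)]
    exact hf j (Finset.ne_of_mem_erase hj)

section RandChore

variable {n m : ℕ}

lemma chZ_nonempty {r : Fin n → Fin m → ℝ} {q : Fin m} (hq : q ∈ chQ r) :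
    (chZ r q).Nonempty := by
  simpa [chQ, chZ, Finset.Nonempty] using hq

/-- Conditionally on the permutation `σ`, `RandChore` assigns the items independently, item `q`
to agent `j` with probability `randChoreKernel hn w r σ q j`. -/
def randChoreKernel (hn : 0 < n) (w : Fin m → ℝ) (r : Fin n → Fin m → ℝ)
    (σ : Equiv.Perm (Fin n)) (q : Fin m) (j : Fin n) : ℝ :=
  if q ∈ chQ r then (if r j q = 0 then 1 / ((chZ r q).card : ℝ) else 0)
  else (if j = σ ⟨chRank w r q % n, Nat.mod_lt _ hn⟩ then 1 else 0)

lemma sum_randChoreKernel (hn : 0 < n) (w : Fin m → ℝ) (r : Fin n → Fin m → ℝ)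
    (σ : Equiv.Perm (Fin n)) (q : Fin m) : ∑ j, randChoreKernel hn w r σ q j = 1 := by
  unfold randChoreKernel
  split_ifs with hq
  · rw [Finset.sum_ite, Finset.sum_const_zero, add_zero, Finset.sum_const, nsmul_eq_mul]
    have hZpos : ((chZ r q).card : ℝ) ≠ 0 := by exact_mod_cast (chZ_nonempty hq).card_pos.ne'
    exact mul_one_div_cancel hZpos
  · simp

lemma randChoreProb_eq_sum_prod_kernel (hn : 0 < n) (w : Fin m → ℝ) (r : Fin n → Fin m → ℝ)
    (A : Fin m → Fin n) :
    randChoreProb hn w r A = (∑ σ : Equiv.Perm (Fin n), ∏ q, randChoreKernel hn w r σ q (A q))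
      / Fintype.card (Equiv.Perm (Fin n)) := by
  rw [randChoreProb, div_mul_eq_mul_div, Finset.sum_mul]
  congr 1
  refine Finset.sum_congr rfl fun σ _ => ?_
  rw [← Finset.prod_mul_prod_compl (chQ r), mul_comm]
  congr 1
  · exact Finset.prod_congr rfl fun q hq => by simp [randChoreKernel, hq]
  · convert (Finset.prod_boole (s := (chQ r)ᶜ)
      (p := fun q => A q = σ ⟨chRank w r q % n, Nat.mod_lt _ hn⟩)).symm using 1
    · congr
    · exact Finset.prod_congr rfl fun q hq => by
        simp [randChoreKernel, Finset.mem_compl.mp hq]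

def randChoreMarginal (r : Fin n → Fin m → ℝ) (q : Fin m) (i : Fin n) : ℝ :=
  if q ∈ chQ r then (if r i q = 0 then 1 / ((chZ r q).card : ℝ) else 0) else 1 / (n : ℝ)

lemma randChoreMarginal_nonneg (r : Fin n → Fin m → ℝ) (q : Fin m) (i : Fin n) :
    0 ≤ randChoreMarginal r q i := by
  unfold randChoreMarginal
  split_ifs <;> positivity

lemma sum_randChoreProb_mul_ite_eq_marginal (hn : 0 < n) (w : Fin m → ℝ)
    (r : Fin n → Fin m → ℝ) (q : Fin m) (i : Fin n) :
    ∑ A, randChoreProb hn w r A * (if A q = i then 1 else 0) = randChoreMarginal r q i := by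
  simp_rw [randChoreProb_eq_sum_prod_kernel, div_mul_eq_mul_div, ← Finset.sum_div,
    Finset.sum_mul]
  rw [Finset.sum_comm]
  simp_rw [sum_pi_prod_mul_ite_apply_eq _ q i fun j _ => sum_randChoreKernel hn w r _ j]
  have hperm : (Fintype.card (Equiv.Perm (Fin n)) : ℝ) ≠ 0 := by positivity
  by_cases hq : q ∈ chQ r
  · simp only [randChoreKernel, randChoreMarginal, if_pos hq]
    rw [Finset.sum_const, Finset.card_univ, nsmul_eq_mul, mul_div_cancel_left₀ _ hperm]
  · simp only [randChoreKernel, randChoreMarginal, if_neg hq, eq_comm (a := i)]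
    rw [sum_perm_ite_apply_eq, Fintype.card_fin, div_div_cancel_left' hperm, one_div]

lemma randChoreExp_eq_sum_mul_marginal (hn : 0 < n) (w : Fin m → ℝ) (r : Fin n → Fin m → ℝ)
    (vi : Fin m → ℝ) (i : Fin n) :
    randChoreExp hn w r vi i = ∑ q, vi q * randChoreMarginal r q i := by
  simp_rw [randChoreExp, sval, bundle, Finset.sum_filter, Finset.mul_sum,
    ← sum_randChoreProb_mul_ite_eq_marginal hn w r, Finset.mul_sum]
  rw [Finset.sum_comm]
  refine Finset.sum_congr rfl fun q _ => Finset.sum_congr rfl fun A _ => ?_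
  split_ifs <;> ring

lemma sum_randChoreMarginal_le_of_chZ_subset {r r' : Fin n → Fin m → ℝ} {q : Fin m}
    {S : Finset (Fin n)} (hq : q ∉ chQ r') (hZ : chZ r q ⊆ S) :
    ∑ i ∈ S, randChoreMarginal r' q i ≤ ∑ i ∈ S, randChoreMarginal r q i := by
  by_cases hqr : q ∈ chQ r
  · obtain ⟨i₀, -⟩ := chZ_nonempty hqr
    have hcard : (S.card : ℝ) ≤ n := by exact_mod_cast (Finset.card_le_univ S).trans_eq (by simp)
    have hZpos : ((chZ r q).card : ℝ) ≠ 0 := by exact_mod_cast (chZ_nonempty hqr).card_pos.ne'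
    have hZ_eq : S.filter (fun i => r i q = 0) = chZ r q := by
      ext i
      simp only [chZ, Finset.mem_filter, Finset.mem_univ, true_and, and_iff_right_iff_imp]
      exact fun hi => hZ (by simpa [chZ] using hi)
    have hone : ∑ i ∈ S, randChoreMarginal r q i = 1 := by
      simp only [randChoreMarginal, if_pos hqr]
      rw [← Finset.sum_filter, hZ_eq, Finset.sum_const, nsmul_eq_mul, mul_one_div_cancel hZpos]
    rw [hone]
    simp only [randChoreMarginal, if_neg hq, Finset.sum_const, nsmul_eq_mul]
    rw [mul_one_div, div_le_one (by exact_mod_cast i₀.pos)]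
    exact hcard
  · simp only [randChoreMarginal, if_neg hq, if_neg hqr, le_refl]

lemma sum_mul_randChoreMarginal_le_truthful {w : Fin m → ℝ} (hw : ∀ j, w j < 0)
    {v : Fin n → Fin m → ℝ} (hv : ∀ i j, v i j = 0 ∨ v i j = w j)
    (r : Fin n → Fin m → ℝ) (S : Finset (Fin n)) (q : Fin m) :
    ∑ i ∈ S, v i q * randChoreMarginal r q i ≤
      ∑ i ∈ S, v i q * randChoreMarginal (fun i' => if i' ∈ S then v i' else r i') q i := by
  set t : Fin n → Fin m → ℝ := fun i' => if i' ∈ S then v i' else r i'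
  by_cases hqt : q ∈ chQ t
  · have hzero : ∀ i ∈ S, v i q * randChoreMarginal t q i = 0 := fun i hi => by
      rcases hv i q with h | h
      · rw [h, zero_mul]
      · have hti : t i q ≠ 0 := by simp [t, hi, h, (hw q).ne]
        simp [randChoreMarginal, hqt, hti]
    have hv_nonpos : ∀ i, v i q ≤ 0 := fun i => (hv i q).elim le_of_eq fun h => h ▸ (hw q).le
    rw [Finset.sum_eq_zero hzero]
    exact Finset.sum_nonpos fun i _ =>
      mul_nonpos_of_nonpos_of_nonneg (hv_nonpos i) (randChoreMarginal_nonneg r q i)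
  · have hreport : ∀ i, t i q ≠ 0 := fun i hi => hqt (by simpa [chQ] using ⟨i, hi⟩)
    have hvS : ∀ i ∈ S, v i q = w q := fun i hi =>
      (hv i q).resolve_left fun h => hreport i (by simp [t, hi, h])
    have hZ : chZ r q ⊆ S := fun i hi => by
      by_contra hiS
      exact hreport i (by simpa [t, hiS, chZ] using hi)
    have hfactor : ∀ r' : Fin n → Fin m → ℝ,
        ∑ i ∈ S, v i q * randChoreMarginal r' q i = w q * ∑ i ∈ S, randChoreMarginal r' q i :=
      fun r' => by
        rw [Finset.mul_sum]
        exact Finset.sum_congr rfl fun i hi => by rw [hvS i hi]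
    rw [hfactor, hfactor]
    exact mul_le_mul_of_nonpos_left (sum_randChoreMarginal_le_of_chZ_subset hqt hZ) (hw q).le

end RandChore

/-- `RandChore` is group-strategyproof in expectation: no coalition `S` has a
joint misreport (the others' reports being fixed) making every member at least as well off
in expectation as under truthful reporting by `S`, with at least one member strictly better off. -/
theorem randChore_GSPIE (n m : ℕ) (hn : 0 < n)
    (w : Fin m → ℝ) (hw : ∀ j, w j < 0)
    (v : Fin n → Fin m → ℝ) (hv : ∀ i j, v i j = 0 ∨ v i j = w j) :
    ¬ ∃ (S : Finset (Fin n)) (r : Fin n → Fin m → ℝ),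
        (∀ i j, r i j = 0 ∨ r i j = w j) ∧
        (∀ i ∈ S, randChoreExp hn w r (v i) i ≥
          randChoreExp hn w (fun i' => if i' ∈ S then v i' else r i') (v i) i) ∧
        (∃ i ∈ S, randChoreExp hn w r (v i) i >
          randChoreExp hn w (fun i' => if i' ∈ S then v i' else r i') (v i) i) := by
  rintro ⟨S, r, -, hge, i₀, hi₀, hgt⟩
  set t : Fin n → Fin m → ℝ := fun i' => if i' ∈ S then v i' else r i'
  have hcoalition : ∀ r' : Fin n → Fin m → ℝ, ∑ i ∈ S, randChoreExp hn w r' (v i) i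
      = ∑ q, ∑ i ∈ S, v i q * randChoreMarginal r' q i := fun r' => by
    simp_rw [randChoreExp_eq_sum_mul_marginal]
    exact Finset.sum_comm
  have hle : ∑ i ∈ S, randChoreExp hn w r (v i) i ≤ ∑ i ∈ S, randChoreExp hn w t (v i) i := by
    rw [hcoalition, hcoalition]
    exact Finset.sum_le_sum fun q _ => sum_mul_randChoreMarginal_le_truthful hw hv r S q
  have hlt : ∑ i ∈ S, randChoreExp hn w t (v i) i < ∑ i ∈ S, randChoreExp hn w r (v i) i :=
    Finset.sum_lt_sum hge ⟨i₀, hi₀, hgt⟩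
  exact hlt.not_ge hle
end
end

section
/- If all n agents share the same additive valuation with v(e) ≤ 0 for every item e, and the items are listed in nonincreasing order of value and allocated round-robin according to an arbitrary permutation σ of {1, ..., n} (the t-th item in the list goes to agent σ(((t-1) mod n) + 1)), producing allocation A* = (A*_1, ..., A*_n), then min_{i ∈ [n]} v(A*_i) ≥ 2 · max_B min_{i ∈ [n]} v(B_i), where B ranges over all allocations of the items; i.e., the round-robin allocation is a 2-approximation of the maximum egalitarian welfare. -/
/-!
Every bundle of an allocation is worth at most any single chore in it, and the worst bundle is
worth at most the average `v(E) / n`; so `OPT ≤ v e` for every chore `e` and `n * OPT ≤ v(E)`.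
In the sorted list, the agent in round-robin position `p` receives the items `p, p + n, …, p + K n`.
Each of them but the last is worth at least each of the `n` items of the block it opens, and
the blocks cover positions `p, …, p + K n - 1`, so `n * (v(A_i) - v(last)) ≥ v(E)`. Hence
`n * v(A_i) ≥ v(E) + n * v(last) ≥ 2 n * OPT`.
-/

open Finset

attribute [local instance] Classical.propDecidable

noncomputable section

lemma sum_Ico_le_mul_sum_range {c : ℕ → ℝ} {p n : ℕ} :
    ∀ {K : ℕ}, AntitoneOn c (Set.Ico p (p + K * n)) →
      ∑ j ∈ Ico p (p + K * n), c j ≤ n * ∑ k ∈ range K, c (p + k * n)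
  | 0, _ => by simp
  | K + 1, hc => by
    have hsplit : p + (K + 1) * n = p + K * n + n := by ring
    rw [hsplit] at hc ⊢
    rw [← sum_Ico_consecutive _ (Nat.le_add_right p (K * n)) (Nat.le_add_right _ n),
      sum_range_succ, mul_add]
    have hblock : ∑ j ∈ Ico (p + K * n) (p + K * n + n), c j ≤ n * c (p + K * n) := by
      calc ∑ j ∈ Ico (p + K * n) (p + K * n + n), c j
          ≤ ∑ _j ∈ Ico (p + K * n) (p + K * n + n), c (p + K * n) :=
            sum_le_sum fun j hj => by
              rw [Finset.mem_Ico] at hj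
              exact hc ⟨by omega, by omega⟩ ⟨by omega, hj.2⟩ hj.1
        _ = n * c (p + K * n) := by simp
    have hinit := sum_Ico_le_mul_sum_range (n := n) (K := K)
      (hc.mono (Set.Ico_subset_Ico_right (by omega)))
    linarith

lemma filter_range_mod_eq_image {n p len K : ℕ} (hp : p < n) (hK : p + K * n < len)
    (hK' : len ≤ p + (K + 1) * n) :
    {j ∈ range len | j % n = p} = (range (K + 1)).image (fun k => p + k * n) := by
  ext j
  simp only [mem_filter, mem_range, mem_image]
  constructor
  · rintro ⟨hj, rfl⟩
    refine ⟨j / n, ?_, by rw [mul_comm]; exact Nat.mod_add_div j n⟩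
    by_contra! h
    have := Nat.mul_le_mul_right n h
    have := Nat.mod_add_div j n
    rw [mul_comm] at this
    omega
  · rintro ⟨k, hk, rfl⟩
    have := Nat.mul_le_mul_right n (Nat.le_of_lt_succ hk)
    exact ⟨by omega, by rw [Nat.add_mul_mod_self_right, Nat.mod_eq_of_lt hp]⟩

theorem sum_range_add_mul_le_mul_sum_filter_mod {c : ℕ → ℝ} {n len p : ℕ} {x : ℝ} (hp : p < n)
    (hc : AntitoneOn c (Set.Iio len)) (hc0 : ∀ j < len, c j ≤ 0) (hx : ∀ j < len, x ≤ c j)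
    (hx0 : x ≤ 0) :
    ∑ j ∈ range len, c j + n * x ≤ n * ∑ j ∈ range len with j % n = p, c j := by
  have htotal : ∑ j ∈ range len, c j ≤ 0 := sum_nonpos fun j hj => hc0 j (mem_range.1 hj)
  rcases le_or_gt len p with hlen | hlen
  · have hempty : {j ∈ range len | j % n = p} = ∅ :=
      filter_eq_empty_iff.2 fun j hj hjp => by
        have := Nat.mod_le j n
        simp only [mem_range] at hj
        omega
    rw [hempty, sum_empty, mul_zero]
    linarith [mul_nonpos_of_nonneg_of_nonpos (Nat.cast_nonneg (α := ℝ) n) hx0]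
  · have hn : 0 < n := by omega
    obtain ⟨K, hK, hK'⟩ : ∃ K, p + K * n < len ∧ len ≤ p + (K + 1) * n := by
      refine ⟨(len - 1 - p) / n, ?_, ?_⟩
      · have := Nat.div_mul_le_self (len - 1 - p) n
        omega
      · have := Nat.lt_mul_div_succ (len - 1 - p) hn
        rw [mul_comm] at this
        omega
    have hinj : Set.InjOn (fun k => p + k * n) (range (K + 1)) := fun a _ b _ h =>
      Nat.eq_of_mul_eq_mul_right hn (by simpa using h)
    rw [filter_range_mod_eq_image hp hK hK', sum_image hinj, sum_range_succ, mul_add]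
    have hblocks : ∑ j ∈ range len, c j ≤ n * ∑ k ∈ range K, c (p + k * n) :=
      calc ∑ j ∈ range len, c j
          ≤ ∑ j ∈ Ico p (p + K * n), c j :=
            sum_le_sum_of_subset_of_nonpos'
              (fun j hj => by simp only [mem_Ico, mem_range] at hj ⊢; omega)
              (fun j hj _ => hc0 j (mem_range.1 hj))
        _ ≤ n * ∑ k ∈ range K, c (p + k * n) :=
            sum_Ico_le_mul_sum_range
              (hc.mono fun j hj => by simp only [Set.mem_Ico, Set.mem_Iio] at hj ⊢; omega)
    linarith [mul_le_mul_of_nonneg_left (hx _ hK) (Nat.cast_nonneg (α := ℝ) n)]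

lemma List.antitoneOn_getD_of_pairwise {α : Type*} [Preorder α] {l : List α} (d : α)
    (h : l.Pairwise (· ≥ ·)) : AntitoneOn (fun j => l.getD j d) (Set.Iio l.length) := by
  intro i hi j hj hij
  simp only [Set.mem_Iio] at hi hj
  simp only [List.getD_eq_getElem _ _ hi, List.getD_eq_getElem _ _ hj]
  rcases hij.eq_or_lt with rfl | hlt
  · exact le_rfl
  · exact List.pairwise_iff_getElem.1 h i j hi hj hlt

lemma sum_filter_idxOf {α M : Type*} [BEq α] [LawfulBEq α] [Fintype α] [AddCommMonoid M]
    {L : List α} (hnd : L.Nodup) (hall : ∀ a, a ∈ L) (f : α → M) (P : ℕ → Prop)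
    [DecidablePred P] :
    ∑ a with P (L.idxOf a), f a = ∑ j ∈ range L.length with P j, (L.map f).getD j 0 := by
  refine sum_nbij (fun a => L.idxOf a) ?_ ?_ ?_ ?_
  · intro a ha
    simp only [mem_filter, mem_univ, true_and, mem_range] at ha ⊢
    exact ⟨List.idxOf_lt_length_iff.2 (hall a), ha⟩
  · intro a _ b _ h
    exact (List.idxOf_inj (hall a)).1 h
  · intro j hj
    obtain ⟨hjL, hPj⟩ : j < L.length ∧ P j := by simpa using hj
    exact ⟨L[j], by simpa [hnd.idxOf_getElem] using hPj, hnd.idxOf_getElem _ _⟩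
  · intro a _
    simp [List.getElem?_eq_getElem (List.idxOf_lt_length_iff.2 (hall a))]

lemma sum_sval_bundle {m n : ℕ} (B : Fin m → Fin n) (f : Fin m → ℝ) :
    ∑ i, sval f (bundle B i) = ∑ q, f q :=
  sum_fiberwise univ B f

lemma sval_bundle_apply_le {m n : ℕ} {f : Fin m → ℝ} (hf : ∀ e, f e ≤ 0) (B : Fin m → Fin n)
    (e : Fin m) : sval f (bundle B (B e)) ≤ f e := by
  simpa [sval] using sum_le_sum_of_subset_of_nonpos' (f := f)
    (singleton_subset_iff.2 (by simp [bundle] : e ∈ bundle B (B e))) (fun q _ _ => hf q)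

lemma inf'_sval_bundle_le_apply {m n : ℕ} {f : Fin m → ℝ} (hf : ∀ e, f e ≤ 0)
    (B : Fin m → Fin n) (H : (univ : Finset (Fin n)).Nonempty) (e : Fin m) :
    univ.inf' H (fun i => sval f (bundle B i)) ≤ f e :=
  (inf'_le _ (mem_univ (B e))).trans (sval_bundle_apply_le hf B e)

lemma card_mul_inf'_sval_bundle_le {m n : ℕ} (f : Fin m → ℝ) (B : Fin m → Fin n)
    (H : (univ : Finset (Fin n)).Nonempty) :
    n * univ.inf' H (fun i => sval f (bundle B i)) ≤ ∑ q, f q := by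
  simpa [← sum_sval_bundle B f] using
    card_nsmul_le_sum univ (fun i => sval f (bundle B i)) _ fun i _ => inf'_le _ (mem_univ i)

lemma sval_bundle_eq_sum_filter_mod {n m : ℕ} (hn : 0 < n) (v : Fin m → ℝ) {L : List (Fin m)}
    (hnd : L.Nodup) (hall : ∀ q, q ∈ L) (σ : Equiv.Perm (Fin n)) {A : Fin m → Fin n}
    (hA : ∀ q, A q = σ ⟨L.idxOf q % n, Nat.mod_lt _ hn⟩) (i : Fin n) :
    sval v (bundle A i) =
      ∑ j ∈ range L.length with j % n = σ.symm i, (L.map v).getD j 0 := by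
  rw [sval, bundle, ← sum_filter_idxOf hnd hall v]
  refine sum_congr (filter_congr fun q _ => ?_) fun _ _ => rfl
  rw [hA, ← Equiv.eq_symm_apply, Fin.ext_iff]

/-- if all `n` agents share the same additive chore valuation `v` (each item
has value ≤ 0) and the items, listed in nonincreasing order of value, are allocated
round-robin according to an arbitrary permutation `σ`, then the resulting allocation `A` is
a 2-approximation of the optimal egalitarian welfare:
`min_i v(A_i) ≥ 2 · max_B min_i v(B_i)`. -/
theorem roundRobin_identical_chores_EWM_2approx (n m : ℕ) (hn : 0 < n)
    (v : Fin m → ℝ) (hv : ∀ e, v e ≤ 0)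
    (L : List (Fin m)) (hnd : L.Nodup) (hall : ∀ q, q ∈ L)
    (hsorted : L.Pairwise (fun a b => v a ≥ v b))
    (σ : Equiv.Perm (Fin n))
    (A : Fin m → Fin n)
    (hA : ∀ q, A q = σ ⟨L.idxOf q % n, Nat.mod_lt _ hn⟩) :
    Finset.univ.inf' ⟨⟨0, hn⟩, Finset.mem_univ _⟩ (fun i => sval v (bundle A i)) ≥
      2 * Finset.univ.sup' ⟨fun _ => ⟨0, hn⟩, Finset.mem_univ _⟩
        (fun B : Fin m → Fin n =>
          Finset.univ.inf' ⟨⟨0, hn⟩, Finset.mem_univ _⟩ (fun i => sval v (bundle B i))) := by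
  have hopt := exists_mem_eq_sup' ⟨fun _ => ⟨0, hn⟩, mem_univ _⟩ fun B : Fin m → Fin n =>
    univ.inf' ⟨⟨0, hn⟩, mem_univ _⟩ fun i => sval v (bundle B i)
  obtain ⟨B, _, hB⟩ := hopt
  rw [hB, ge_iff_le]
  set opt := univ.inf' ⟨⟨0, hn⟩, mem_univ _⟩ fun i => sval v (bundle B i)
  have hlen (j : ℕ) (hj : j < L.length) : (L.map v).getD j 0 = v L[j] := by
    simp [List.getElem?_eq_getElem hj]
  have htotal : ∑ j ∈ range L.length, (L.map v).getD j 0 = ∑ q, v q := by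
    simpa using (sum_filter_idxOf hnd hall v fun _ => True).symm
  have hopt_avg : n * opt ≤ ∑ j ∈ range L.length, (L.map v).getD j 0 :=
    htotal ▸ card_mul_inf'_sval_bundle_le v B _
  have hopt_item (j : ℕ) (hj : j < L.length) : opt ≤ (L.map v).getD j 0 :=
    hlen j hj ▸ inf'_sval_bundle_le_apply hv B _ _
  have hopt_nonpos : opt ≤ 0 := (inf'_le _ (mem_univ ⟨0, hn⟩)).trans (sum_nonpos fun q _ => hv q)
  refine le_inf' _ _ fun i _ => ?_
  rw [sval_bundle_eq_sum_filter_mod hn v hnd hall σ hA i]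
  have hround := sum_range_add_mul_le_mul_sum_filter_mod (σ.symm i).isLt
    (List.length_map v ▸ List.antitoneOn_getD_of_pairwise 0 (List.pairwise_map.2 hsorted))
    (fun j hj => hlen j hj ▸ hv _) hopt_item hopt_nonpos
  refine le_of_mul_le_mul_left ?_ (Nat.cast_pos.2 hn : (0 : ℝ) < n)
  linarith
end
end

section
/- In the RandMixed mechanism for two agents, correcting a single item's report towards the truth never decreases expected utility: fix agent i with true valuation v_i, an item e_k, and reports (v̂^k_i, v̂_{3-i}) with v̂^k_i(e_k) ≠ v_i(e_k); define v̂_i by v̂_i(e_k) = v_i(e_k) and v̂_i(e) = v̂^k_i(e) for all e ≠ e_k. Then agent i's expected true utility under RandMixed(v̂_i, v̂_{3-i}) is at least his expected true utility under RandMixed(v̂^k_i, v̂_{3-i}). -/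
/-
By linearity of expectation an agent's expected utility is `∑ q, v q * P q`, where
`P q` is the probability that he receives `e_q`. Given the round-robin order the items are
allocated independently, and averaging over the order, `P q` depends only on the two reports on
`e_q`: it is `1`, `1/2` or `0` according as his report is above, equal to or below the other's.
Correcting the report on `e_k` therefore changes only the term of `e_k`, and since `P k` is
monotone in the own report, moving the report towards the true value `v k ∈ {-c, 0, g}` cannot
decrease `v k * P k`.
-/

open Finset

attribute [local instance] Classical.propDecidable

noncomputable section

/-- Items on which both agents report value zero. -/
def mxQ0 {m : ℕ} (r : Fin 2 → Fin m → ℝ) : Finset (Fin m) :=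
  Finset.univ.filter fun q => r 0 q = 0 ∧ r 1 q = 0

/-- Items on which agent 1 reports strictly more than agent 2. -/
def mxQ1 {m : ℕ} (r : Fin 2 → Fin m → ℝ) : Finset (Fin m) :=
  Finset.univ.filter fun q => r 0 q > r 1 q

/-- Items on which agent 1 reports strictly less than agent 2. -/
def mxQ2 {m : ℕ} (r : Fin 2 → Fin m → ℝ) : Finset (Fin m) :=
  Finset.univ.filter fun q => r 0 q < r 1 q

/-- Items on which the two agents report the same nonzero value. -/
def mxQ3 {m : ℕ} (r : Fin 2 → Fin m → ℝ) : Finset (Fin m) :=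
  Finset.univ.filter fun q => r 0 q = r 1 q ∧ r 0 q ≠ 0

/-- The position of item `q ∈ Q₃` in the list of the items of `Q₃` sorted in nonincreasing
order of their (common reported) inherent value, ties broken by smallest index. -/
def mxRank {m : ℕ} (r : Fin 2 → Fin m → ℝ) (q : Fin m) : ℕ :=
  ((mxQ3 r).filter fun q' => r 0 q' > r 0 q ∨ (r 0 q' = r 0 q ∧ q' < q)).card

/-- The probability that mechanism `RandMixed`, on reported profile `r`, outputs the
deterministic allocation `A`: each item of `Q₀` goes independently to a uniformly random
agent, the items of `Q₁` (resp. `Q₂`) go to agent 1 (resp. agent 2), and the items of `Q₃`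
are allocated round-robin in nonincreasing inherent value according to a uniformly random
permutation of the two agents. -/
def randMixedProb {m : ℕ} (r : Fin 2 → Fin m → ℝ) (A : Fin m → Fin 2) : ℝ :=
  ((1 : ℝ) / 2) ^ (mxQ0 r).card *
    ((∑ σ : Equiv.Perm (Fin 2),
        if (∀ q ∈ mxQ1 r, A q = 0) ∧ (∀ q ∈ mxQ2 r, A q = 1) ∧
           (∀ q ∈ mxQ3 r, A q = σ ⟨mxRank r q % 2, Nat.mod_lt _ two_pos⟩)
        then (1 : ℝ) else 0)
      / (Fintype.card (Equiv.Perm (Fin 2)) : ℝ))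

/-- The expected utility, under `RandMixed` on reported profile `r`, of agent `i` whose true
additive valuation is `vi`. -/
def randMixedExp {m : ℕ} (r : Fin 2 → Fin m → ℝ) (vi : Fin m → ℝ) (i : Fin 2) : ℝ :=
  ∑ A : Fin m → Fin 2, randMixedProb r A * sval vi (bundle A i)

theorem Fintype.sum_prod_mul_ite_apply_eq {ι κ R : Type*} [Fintype ι] [DecidableEq ι]
    [Fintype κ] [DecidableEq κ] [CommSemiring R]
    (f : ι → κ → R) (hf : ∀ a, ∑ b, f a b = 1) (a₀ : ι) (b₀ : κ) :
    ∑ x : ι → κ, (∏ a, f a (x a)) * (if x a₀ = b₀ then 1 else 0) = f a₀ b₀ := by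
  have hind (x : ι → κ) : (if x a₀ = b₀ then (1 : R) else 0) =
      ∏ a, if a = a₀ then (if x a = b₀ then 1 else 0) else 1 :=
    (Fintype.prod_ite_eq' a₀ fun a => if x a = b₀ then (1 : R) else 0).symm
  simp_rw [hind, ← prod_mul_distrib]
  rw [← Fintype.prod_sum fun a b => f a b * if a = a₀ then (if b = b₀ then 1 else 0) else 1,
    Fintype.prod_eq_single a₀]
  · simp
  · intro a ha
    simp [ha, hf]

lemma Monotone.mul_apply_le_mul_apply_self {R : Type*} [CommRing R] [LinearOrder R]
    [IsStrictOrderedRing R] {f : R → R} (hf : Monotone f) {a b : R}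
    (h : a * (b - a) ≤ 0) : a * f b ≤ a * f a := by
  rcases lt_trichotomy a 0 with ha | rfl | ha
  · exact mul_le_mul_of_nonpos_left (hf (by nlinarith)) ha.le
  · simp
  · exact mul_le_mul_of_nonneg_left (hf (by nlinarith)) ha.le

lemma mul_sub_nonpos_of_restricted {R : Type*} [CommRing R] [LinearOrder R]
    [IsStrictOrderedRing R] {c g a b : R} (hc : 0 < c) (hg : 0 < g)
    (ha : a = -c ∨ a = 0 ∨ a = g) (hb : b = -c ∨ b = 0 ∨ b = g) : a * (b - a) ≤ 0 := by
  rcases ha with rfl | rfl | rfl <;> rcases hb with rfl | rfl | rfl <;> nlinarith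

lemma card_perm_fin_two_apply_eq (t i : Fin 2) : #{σ : Equiv.Perm (Fin 2) | σ t = i} = 1 := by
  revert t i
  decide

section RandMixed

variable {m : ℕ}

lemma mem_mxQ0 {r : Fin 2 → Fin m → ℝ} {q : Fin m} : q ∈ mxQ0 r ↔ r 0 q = 0 ∧ r 1 q = 0 := by
  simp [mxQ0]

lemma mem_mxQ1 {r : Fin 2 → Fin m → ℝ} {q : Fin m} : q ∈ mxQ1 r ↔ r 1 q < r 0 q := by
  simp [mxQ1]

lemma mem_mxQ2 {r : Fin 2 → Fin m → ℝ} {q : Fin m} : q ∈ mxQ2 r ↔ r 0 q < r 1 q := by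
  simp [mxQ2]

lemma mem_mxQ3 {r : Fin 2 → Fin m → ℝ} {q : Fin m} : q ∈ mxQ3 r ↔ r 0 q = r 1 q ∧ r 0 q ≠ 0 := by
  simp [mxQ3]

def winProb (x y : ℝ) : ℝ := if y < x then 1 else if x < y then 0 else 1 / 2

lemma monotone_winProb (y : ℝ) : Monotone fun x => winProb x y := by
  intro x x' h
  simp only [winProb]
  split_ifs <;> linarith

lemma winProb_add_winProb_swap (x y : ℝ) : winProb x y + winProb y x = 1 := by
  simp only [winProb]
  split_ifs <;> linarith

def roundRobinAgent (r : Fin 2 → Fin m → ℝ) (σ : Equiv.Perm (Fin 2)) (q : Fin m) : Fin 2 :=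
  σ ⟨mxRank r q % 2, Nat.mod_lt _ two_pos⟩

/-- The law of the agent receiving item `q` once the round-robin order `σ` is fixed: given `σ`,
`RandMixed` allocates the items independently. -/
def recipientLaw (r : Fin 2 → Fin m → ℝ) (σ : Equiv.Perm (Fin 2)) (q : Fin m) (j : Fin 2) : ℝ :=
  (if q ∈ mxQ0 r then 1 / 2 else 1) *
    if (q ∈ mxQ1 r → j = 0) ∧ (q ∈ mxQ2 r → j = 1) ∧ (q ∈ mxQ3 r → j = roundRobinAgent r σ q)
    then 1 else 0

lemma randMixedProb_eq_sum_prod_recipientLaw (r : Fin 2 → Fin m → ℝ) (A : Fin m → Fin 2) :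
    randMixedProb r A = (∑ σ, ∏ q, recipientLaw r σ q (A q)) / 2 := by
  have hcard : (Fintype.card (Equiv.Perm (Fin 2)) : ℝ) = 2 := by simp [Fintype.card_perm]
  simp only [randMixedProb, recipientLaw, prod_mul_distrib, Fintype.prod_boole,
    prod_ite_mem univ (mxQ0 r) fun _ => (1 / 2 : ℝ), univ_inter, prod_const, hcard, forall_and]
  rw [mul_div_assoc', mul_sum]
  rfl

lemma recipientLaw_of_mem_mxQ3 {r : Fin 2 → Fin m → ℝ} {q : Fin m} (hq : q ∈ mxQ3 r)
    (σ : Equiv.Perm (Fin 2)) (j : Fin 2) :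
    recipientLaw r σ q j = if j = roundRobinAgent r σ q then 1 else 0 := by
  rw [mem_mxQ3] at hq
  have h1 : r 1 q ≠ 0 := hq.1 ▸ hq.2
  simp [recipientLaw, mem_mxQ0, mem_mxQ1, mem_mxQ2, mem_mxQ3, hq, h1]

lemma recipientLaw_of_not_mem_mxQ3 {r : Fin 2 → Fin m → ℝ} {q : Fin m} (hq : q ∉ mxQ3 r)
    (σ : Equiv.Perm (Fin 2)) (j : Fin 2) :
    recipientLaw r σ q j = winProb (r j q) (r j.rev q) := by
  rw [mem_mxQ3] at hq
  simp only [recipientLaw, winProb, mem_mxQ0, mem_mxQ1, mem_mxQ2, mem_mxQ3, hq]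
  rcases lt_trichotomy (r 0 q) (r 1 q) with h | h | h
  · have h0 : ¬(r 0 q = 0 ∧ r 1 q = 0) := fun h0 => h.ne (h0.1.trans h0.2.symm)
    fin_cases j <;> simp [h, h0, not_lt.2 h.le]
  · have h0 : r 0 q = 0 := not_not.1 fun h0 => hq ⟨h, h0⟩
    have h1 : r 1 q = 0 := h ▸ h0
    fin_cases j <;> simp [h0, h1]
  · have h0 : ¬(r 0 q = 0 ∧ r 1 q = 0) := fun h0 => h.ne (h0.2.trans h0.1.symm)
    fin_cases j <;> simp [h, h0, not_lt.2 h.le]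

lemma sum_recipientLaw (r : Fin 2 → Fin m → ℝ) (σ : Equiv.Perm (Fin 2)) (q : Fin m) :
    ∑ j, recipientLaw r σ q j = 1 := by
  by_cases hq : q ∈ mxQ3 r
  · simp [recipientLaw_of_mem_mxQ3 hq]
  · simp only [recipientLaw_of_not_mem_mxQ3 hq, Fin.sum_univ_two]
    exact winProb_add_winProb_swap _ _

lemma average_recipientLaw (r : Fin 2 → Fin m → ℝ) (q : Fin m) (i : Fin 2) :
    (∑ σ, recipientLaw r σ q i) / 2 = winProb (r i q) (r i.rev q) := by
  by_cases hq : q ∈ mxQ3 r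
  · have hrr : ∑ σ, (if i = roundRobinAgent r σ q then (1 : ℝ) else 0) = 1 := by
      simp only [eq_comm (a := i), sum_boole, roundRobinAgent, card_perm_fin_two_apply_eq,
        Nat.cast_one]
    have htie : r i q = r i.rev q := by
      rw [mem_mxQ3] at hq
      fin_cases i <;> simp [hq.1]
    simp [recipientLaw_of_mem_mxQ3 hq, hrr, htie, winProb]
  · simp [recipientLaw_of_not_mem_mxQ3 hq, Fintype.card_perm]

lemma sum_randMixedProb_mul_ite (r : Fin 2 → Fin m → ℝ) (q : Fin m) (i : Fin 2) :
    ∑ A, randMixedProb r A * (if A q = i then 1 else 0) = winProb (r i q) (r i.rev q) := by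
  simp_rw [randMixedProb_eq_sum_prod_recipientLaw, div_mul_eq_mul_div, sum_mul, ← sum_div]
  rw [sum_comm, ← average_recipientLaw]
  congr 1
  exact sum_congr rfl fun σ _ =>
    Fintype.sum_prod_mul_ite_apply_eq _ (sum_recipientLaw r σ) q i

lemma randMixedExp_eq_sum_mul_winProb (r : Fin 2 → Fin m → ℝ) (v : Fin m → ℝ) (i : Fin 2) :
    randMixedExp r v i = ∑ q, v q * winProb (r i q) (r i.rev q) := by
  have hval (A : Fin m → Fin 2) : sval v (bundle A i) = ∑ q, v q * if A q = i then 1 else 0 := by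
    simp [sval, bundle, sum_filter]
  simp_rw [randMixedExp, hval, mul_sum, ← sum_randMixedProb_mul_ite]
  rw [sum_comm]
  refine sum_congr rfl fun q _ => ?_
  rw [mul_sum]
  exact sum_congr rfl fun A _ => mul_left_comm _ _ _

end RandMixed

theorem randMixed_single_item_correction_general (m : ℕ)
    (c g : Fin m → ℝ) (hc : ∀ q, 0 < c q) (hg : ∀ q, 0 < g q)
    (i : Fin 2) (vi : Fin m → ℝ) (hvi : ∀ q, vi q = -c q ∨ vi q = 0 ∨ vi q = g q)
    (k : Fin m)
    (rk : Fin 2 → Fin m → ℝ) (hrk : ∀ i' q, rk i' q = -c q ∨ rk i' q = 0 ∨ rk i' q = g q) :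
    randMixedExp (Function.update rk i (Function.update (rk i) k (vi k))) vi i ≥
      randMixedExp rk vi i := by
  rw [ge_iff_le, randMixedExp_eq_sum_mul_winProb, randMixedExp_eq_sum_mul_winProb]
  refine sum_le_sum fun q _ => ?_
  have hother : i.rev ≠ i := by fin_cases i <;> decide
  by_cases hq : q = k
  · subst hq
    simp only [Function.update_self, Function.update_of_ne hother]
    exact (monotone_winProb _).mul_apply_le_mul_apply_self
      (mul_sub_nonpos_of_restricted (hc q) (hg q) (hvi q) (hrk i q))
  · simp [Function.update_of_ne hother, Function.update_of_ne hq]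

/-- in `RandMixed`, correcting a single item's report towards the truth never
decreases the deviating agent's expected true utility. -/
theorem randMixed_single_item_correction (m : ℕ)
    (c g : Fin m → ℝ) (hc : ∀ q, 0 < c q) (hg : ∀ q, 0 < g q)
    (i : Fin 2) (vi : Fin m → ℝ) (hvi : ∀ q, vi q = -c q ∨ vi q = 0 ∨ vi q = g q)
    (k : Fin m)
    (rk : Fin 2 → Fin m → ℝ) (hrk : ∀ i' q, rk i' q = -c q ∨ rk i' q = 0 ∨ rk i' q = g q)
    (hmis : rk i k ≠ vi k) :
    randMixedExp (Function.update rk i (Function.update (rk i) k (vi k))) vi i ≥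
      randMixedExp rk vi i :=
  randMixed_single_item_correction_general m c g hc hg i vi hvi k rk hrk
end
end
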